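/- arXiv:2009.04262 — 3 statements merged into one kernel-verified Lean document; each statement's English description precedes it below -/
import Mathlib

section
/- Let X = {(x, y) ∈ ℝ² : xy = 0} ⊆ ℝ². The set of velocity vectors {α'(0) : α : ℝ → ℝ² smooth, α(ℝ) ⊆ X, α(0) = (0,0)} equals the full set X itself; in particular its linear span is all of ℝ². -/
/-- For the cross `X = {(x,y) ∈ ℝ² : xy = 0}`, the set of velocity vectors at `0` of
smooth curves in `X` through the origin equals `X` itself, and its linear span is all
of `ℝ²`. -/
theorem stmt10 :
    {v : ℝ × ℝ | ∃ α : ℝ → ℝ × ℝ, ContDiff ℝ (⊤ : ℕ∞) α ∧ (∀ t, (α t).1 * (α t).2 = 0) ∧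
        α 0 = 0 ∧ deriv α 0 = v} = {v : ℝ × ℝ | v.1 * v.2 = 0} ∧
    Submodule.span ℝ {v : ℝ × ℝ | v.1 * v.2 = 0} = ⊤ := by
  constructor
  · ext v
    constructor
    · rintro ⟨α, hα, hX, h0, hd⟩
      have hdiff : DifferentiableAt ℝ α 0 := (hα.differentiable (by simp)) 0
      have hderiv : HasDerivAt α v 0 := by
        rw [← hd]; exact hdiff.hasDerivAt
      have h1 : HasDerivAt (fun t => (α t).1) v.1 0 := hderiv.fst
      have h2 : HasDerivAt (fun t => (α t).2) v.2 0 := hderiv.snd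
      have t1 := hasDerivAt_iff_tendsto_slope.mp h1
      have t2 := hasDerivAt_iff_tendsto_slope.mp h2
      have tprod : Filter.Tendsto (fun t => slope (fun t => (α t).1) 0 t *
          slope (fun t => (α t).2) 0 t) (nhdsWithin 0 {(0:ℝ)}ᶜ) (nhds (v.1 * v.2)) :=
        t1.mul t2
      have hzero : ∀ t ∈ ({(0:ℝ)}ᶜ : Set ℝ), slope (fun t => (α t).1) 0 t *
          slope (fun t => (α t).2) 0 t = 0 := by
        intro t ht
        simp only [slope_def_field, h0, Prod.fst_zero, Prod.snd_zero, sub_zero]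
        rw [div_mul_div_comm, hX t, zero_div]
      have tzero : Filter.Tendsto (fun t => slope (fun t => (α t).1) 0 t *
          slope (fun t => (α t).2) 0 t) (nhdsWithin 0 {(0:ℝ)}ᶜ) (nhds 0) := by
        apply Filter.Tendsto.congr' _ tendsto_const_nhds
        filter_upwards [self_mem_nhdsWithin] with t ht
        exact (hzero t ht).symm
      exact tendsto_nhds_unique tprod tzero
    · intro hv
      refine ⟨fun t => t • v, ?_, ?_, ?_, ?_⟩
      · exact contDiff_id.smul contDiff_const
      · intro t
        simp only [Prod.smul_fst, Prod.smul_snd, smul_eq_mul]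
        calc t * v.1 * (t * v.2) = t * t * (v.1 * v.2) := by ring
          _ = 0 := by rw [hv]; ring
      · simp
      · have : HasDerivAt (fun t : ℝ => t • v) ((1:ℝ) • v) 0 := (hasDerivAt_id 0).smul_const v
        rw [this.deriv, one_smul]
  · rw [eq_top_iff]
    rintro ⟨x, y⟩ -
    have h1 : ((1, 0) : ℝ × ℝ) ∈ {v : ℝ × ℝ | v.1 * v.2 = 0} := by simp
    have h2 : ((0, 1) : ℝ × ℝ) ∈ {v : ℝ × ℝ | v.1 * v.2 = 0} := by simp
    have : ((x, y) : ℝ × ℝ) = x • (1, 0) + y • (0, 1) := by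
      simp [Prod.ext_iff]
    rw [this]
    exact Submodule.add_mem _
      (Submodule.smul_mem _ _ (Submodule.subset_span h1))
      (Submodule.smul_mem _ _ (Submodule.subset_span h2))
end

section
/- Let α : ℝ → ℝ² be a smooth map with α(t)₁ · α(t)₂ = 0 for all t and α(0) = 0. Then α'(0)₁ · α'(0)₂ = 0, i.e., the velocity at 0 lies on one of the coordinate axes. -/
/-- If `α : ℝ → ℝ²` is smooth, takes values in the cross `{(x,y) : xy = 0}`, and passes
through the origin at time `0`, then its velocity at `0` lies on one of the coordinate
axes: `α'(0)₁ · α'(0)₂ = 0`. -/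
theorem stmt11 (α : ℝ → ℝ × ℝ) (hα : ContDiff ℝ (⊤ : ℕ∞) α)
    (h : ∀ t, (α t).1 * (α t).2 = 0) (h0 : α 0 = 0) :
    (deriv α 0).1 * (deriv α 0).2 = 0 := by
  have hd : HasDerivAt α (deriv α 0) 0 :=
    (hα.differentiable (by simp) 0).hasDerivAt
  have h1 : HasDerivAt (fun t => (α t).1) (deriv α 0).1 0 := hd.fst
  have h2 : HasDerivAt (fun t => (α t).2) (deriv α 0).2 0 := hd.snd
  rw [hasDerivAt_iff_tendsto_slope] at h1 h2
  have hprod : Filter.Tendsto (fun t => slope (fun t => (α t).1) 0 t *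
      slope (fun t => (α t).2) 0 t) (nhdsWithin 0 {0}ᶜ)
      (nhds ((deriv α 0).1 * (deriv α 0).2)) := h1.mul h2
  have hzero : Filter.Tendsto (fun t => slope (fun t => (α t).1) 0 t *
      slope (fun t => (α t).2) 0 t) (nhdsWithin 0 {0}ᶜ) (nhds 0) := by
    have : ∀ t : ℝ, slope (fun t => (α t).1) 0 t * slope (fun t => (α t).2) 0 t = 0 := by
      intro t
      simp only [slope, h0, Prod.fst_zero, Prod.snd_zero, sub_zero, vsub_eq_sub, smul_eq_mul]
      rcases mul_eq_zero.mp (h t) with h' | h' <;> simp [h']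
    simp only [this]
    exact tendsto_const_nhds
  exact tendsto_nhds_unique hprod hzero
end

section
/- Consider the star S with lines spanned by v = (0,1) and w = (1/√2)(1,1) among its lines, the target point s = 2√2·(1,1), starting point x₀ = (0,3), and the iteration x_{k+1} = x_k − t·grad, where at a nonzero point x = λv on a line not containing s the update moves x by −(λ/‖x‖)·v scaled by step size 1 (i.e., x_{k+1} = x_k − (λ/|λ|)·v), at the origin the update moves by +(μ/‖s‖)·w where s = μw, and on the line containing s the update is x_{k+1} = x_k − ((λ−μ)/‖x−s‖)·w for x = λw, s = μw. With constant step size 1, the iteration reaches x₇ = s = 2√2·(1,1) after exactly 7 steps, with x₃ = (0,0). -/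
/-!
Along a line not containing the target the update is a unit step towards the origin, so
`x₀ = 3v` walks down to `x₃ = 0`. From the origin the update jumps to the unit vector `w`,
and on the line `ℝw` of the target `s = 4w` a point `lw` with `l < 4` has `‖lw - s‖ = 4 - l`,
so the update is again a unit step, now towards `s`: `x₄ = w, …, x₇ = 4w = s`. The iterates
before step 4 lie on `ℝv`, which misses `s` since `v, w` are independent, and `x₄, x₅, x₆`
are `w, 2w, 3w ≠ 4w`.
-/

section Module

variable {E : Type*} [AddCommGroup E] [Module ℝ E]

lemma sub_div_abs_smul_of_pos {l : ℝ} (hl : 0 < l) (v : E) :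
    l • v - (l / |l|) • v = (l - 1) • v := by
  rw [abs_of_pos hl, div_self hl.ne', sub_smul, one_smul]

theorem descend_line {x : ℕ → E} {v : E}
    (hstep : ∀ (k : ℕ) (l : ℝ), l ≠ 0 → x k = l • v → x (k + 1) = x k - (l / |l|) • v)
    {k₀ n : ℕ} {m : ℝ} (hn : (n : ℝ) ≤ m) (h₀ : x k₀ = m • v) :
    ∀ j ≤ n, x (k₀ + j) = (m - j) • v := by
  intro j hj
  induction j with
  | zero => simpa using h₀
  | succ j ih =>
    have hpos : 0 < m - j := by
      have : (j : ℝ) + 1 ≤ n := by exact_mod_cast hj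
      linarith
    rw [← add_assoc, hstep _ _ hpos.ne' (ih (by omega)), ih (by omega),
      sub_div_abs_smul_of_pos hpos]
    push_cast
    ring_nf

lemma smul_ne_smul_of_linearIndependent {v w : E} (hvw : LinearIndependent ℝ ![v, w])
    {μ : ℝ} (hμ : μ ≠ 0) (c : ℝ) : c • v ≠ μ • w := by
  intro h
  have := (LinearIndependent.pair_iff.mp hvw c (-μ) (by rw [h, neg_smul, add_neg_cancel])).2
  exact hμ (neg_eq_zero.mp this)

end Module

section Normed

variable {E : Type*} [NormedAddCommGroup E] [NormedSpace ℝ E] {w : E}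

lemma div_norm_smul_self_of_norm_eq_one (hw : ‖w‖ = 1) {μ : ℝ} (hμ : 0 < μ) :
    (μ / ‖μ • w‖) • w = w := by
  rw [norm_smul, hw, mul_one, Real.norm_of_nonneg hμ.le, div_self hμ.ne', one_smul]

lemma smul_sub_div_norm_smul_of_lt (hw : ‖w‖ = 1) {l μ : ℝ} (hl : l < μ) :
    l • w - ((l - μ) / ‖l • w - μ • w‖) • w = (l + 1) • w := by
  have hnorm : ‖l • w - μ • w‖ = μ - l := by
    rw [← sub_smul, norm_smul, hw, mul_one, Real.norm_of_nonpos (by linarith), neg_sub]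
  have hcoeff : (l - μ) / (μ - l) = -1 := by
    rw [div_eq_iff (sub_pos.mpr hl).ne']
    ring
  rw [hnorm, hcoeff]
  module

theorem ascend_line (hw : ‖w‖ = 1) {x : ℕ → E} {μ : ℝ}
    (hstep : ∀ (k : ℕ) (l : ℝ), l ≠ 0 → l ≠ μ → x k = l • w →
      x (k + 1) = x k - ((l - μ) / ‖x k - μ • w‖) • w)
    {k₀ n : ℕ} {m : ℝ} (hm : 0 < m) (hn : m + n ≤ μ) (h₀ : x k₀ = m • w) :
    ∀ j ≤ n, x (k₀ + j) = (m + j) • w := by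
  intro j hj
  induction j with
  | zero => simpa using h₀
  | succ j ih =>
    have hlt : m + j < μ := by
      have : (j : ℝ) + 1 ≤ n := by exact_mod_cast hj
      linarith
    have hpos : 0 < m + j := by positivity
    rw [← add_assoc, hstep _ _ hpos.ne' hlt.ne (ih (by omega)), ih (by omega),
      smul_sub_div_norm_smul_of_lt hw hlt]
    push_cast
    ring_nf

end Normed

lemma EuclideanSpace.norm_eq_one_of_ofLp_eq {W : EuclideanSpace ℝ (Fin 2)}
    (hW : W.ofLp = (Real.sqrt 2)⁻¹ • ![(1 : ℝ), 1]) : ‖W‖ = 1 := by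
  norm_num [EuclideanSpace.norm_eq, hW, Fin.sum_univ_two]

lemma EuclideanSpace.linearIndependent_of_ofLp_eq {V W : EuclideanSpace ℝ (Fin 2)}
    (hV : V.ofLp = ![(0 : ℝ), 1]) (hW : W.ofLp = (Real.sqrt 2)⁻¹ • ![(1 : ℝ), 1]) :
    LinearIndependent ℝ ![V, W] := by
  refine LinearIndependent.pair_iff.mpr fun a b hab => ?_
  have hcoord (i : Fin 2) := congrFun (congrArg WithLp.ofLp hab) i
  have hb : b = 0 := by simpa [hV, hW] using hcoord 0
  have ha : a = 0 := by simpa [hV, hW, hb] using hcoord 1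
  exact ⟨ha, hb⟩

/-- The concrete steepest-descent run on the star: with `v = (0,1)`,
`w = (1/√2)(1,1)`, `s = 2√2·(1,1) = μ·w`, start `x₀ = (0,3)` and constant step size 1,
where the update is `x_{k+1} = x_k − (λ/|λ|)·v` at `x_k = λ·v ≠ 0` (line not containing
`s`), `x_{k+1} = (μ/‖s‖)·w` at the origin, and `x_{k+1} = x_k − ((λ−μ)/‖x_k−s‖)·w` at
`x_k = λ·w ≠ 0` on the line of `s`, the iteration passes through the origin at step 3
and reaches `s` for the first time after exactly 7 steps. -/
theorem stmt16 (V W : EuclideanSpace ℝ (Fin 2))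
    (hV : V = ![(0 : ℝ), 1]) (hW : W = (Real.sqrt 2)⁻¹ • ![(1 : ℝ), 1])
    (s : EuclideanSpace ℝ (Fin 2)) (μ : ℝ) (hμ : μ = 4) (hs : s = μ • W)
    (x : ℕ → EuclideanSpace ℝ (Fin 2))
    (hx0 : x 0 = ![(0 : ℝ), 3])
    (hstep_v : ∀ (k : ℕ) (l : ℝ), l ≠ 0 → x k = l • V →
      x (k + 1) = x k - (l / |l|) • V)
    (hstep_0 : ∀ k : ℕ, x k = 0 → x (k + 1) = (μ / ‖s‖) • W)
    (hstep_w : ∀ (k : ℕ) (l : ℝ), l ≠ 0 → l ≠ μ → x k = l • W →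
      x (k + 1) = x k - ((l - μ) / ‖x k - s‖) • W) :
    x 3 = 0 ∧ x 7 = s ∧ ∀ k < 7, x k ≠ s := by
  subst hs hμ
  have hW1 := EuclideanSpace.norm_eq_one_of_ofLp_eq hW
  have hx0' : x 0 = (3 : ℝ) • V := by
    ext i
    fin_cases i <;> simp [hx0, hV]
  have hdesc := descend_line hstep_v (n := 3) (by norm_num) hx0'
  have hx3 : x 3 = 0 := by simpa using hdesc 3 le_rfl
  have hx4 : x 4 = (1 : ℝ) • W := by
    rw [hstep_0 3 hx3, div_norm_smul_self_of_norm_eq_one hW1 (by norm_num), one_smul]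
  have hasc := ascend_line hW1 hstep_w (n := 3) one_pos (by norm_num) hx4
  refine ⟨hx3, by rw [hasc 3 le_rfl]; norm_num, fun k hk => ?_⟩
  rcases Nat.lt_or_ge k 4 with hk4 | hk4
  · rw [← zero_add k, hdesc k (by omega)]
    exact smul_ne_smul_of_linearIndependent
      (EuclideanSpace.linearIndependent_of_ofLp_eq hV hW) four_ne_zero _
  · obtain ⟨j, rfl⟩ := Nat.exists_eq_add_of_le hk4
    rw [hasc j (by omega)]
    have hj : (1 + j : ℝ) ≠ 4 := by
      have : (j : ℝ) < 3 := by exact_mod_cast (by omega : j < 3)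
      linarith
    have hW0 : W ≠ 0 := norm_ne_zero_iff.mp (by rw [hW1]; exact one_ne_zero)
    exact fun h => hj (smul_left_injective ℝ hW0 h)
end
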